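/- If φ satisfies the ugly equation □φ = (2p/R)∂_T φ + F for a natural number p, then the variable Ψ := R ∂_T φ satisfies □Ψ = (2(p-1)/R)∂_T Ψ + R ∂_T F + (2/R)(∂_T + ∂_R)Ψ. -/

import Mathlib

/-!
STATEMENT 2: If `φ` satisfies the ugly equation `□φ = (2p/R)∂_T φ + F` for a
natural number `p`, then `Ψ := R ∂_T φ` satisfies
`□Ψ = (2(p-1)/R)∂_T Ψ + R ∂_T F + (2/R)(∂_T + ∂_R)Ψ`, for `R > 0` (and `sin θ ≠ 0`).
-/

noncomputable section

def dT (f : ℝ → ℝ → ℝ → ℝ → ℝ) : ℝ → ℝ → ℝ → ℝ → ℝ :=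
  fun T R a b => deriv (fun s => f s R a b) T

def dR (f : ℝ → ℝ → ℝ → ℝ → ℝ) : ℝ → ℝ → ℝ → ℝ → ℝ :=
  fun T R a b => deriv (fun s => f T s a b) R

def dA (f : ℝ → ℝ → ℝ → ℝ → ℝ) : ℝ → ℝ → ℝ → ℝ → ℝ :=
  fun T R a b => deriv (fun s => f T R s b) a

def dB (f : ℝ → ℝ → ℝ → ℝ → ℝ) : ℝ → ℝ → ℝ → ℝ → ℝ :=
  fun T R a b => deriv (fun s => f T R a s) b

/-- Laplacian on the unit round sphere in coordinates `(θ, φ)`. -/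
def lapS2 (f : ℝ → ℝ → ℝ → ℝ → ℝ) : ℝ → ℝ → ℝ → ℝ → ℝ :=
  fun T R a b => dA (dA f) T R a b + (Real.cos a / Real.sin a) * dA f T R a b
    + ((Real.sin a) ^ 2)⁻¹ * dB (dB f) T R a b

/-- Flat wave operator `□u = -∂_T²u + ∂_R²u + (2/R)∂_R u + R⁻² Δ_{S²} u`. -/
def box (f : ℝ → ℝ → ℝ → ℝ → ℝ) : ℝ → ℝ → ℝ → ℝ → ℝ :=
  fun T R a b => -dT (dT f) T R a b + dR (dR f) T R a b + (2 / R) * dR f T R a b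
    + (R ^ 2)⁻¹ * lapS2 f T R a b

def smoothFn (f : ℝ → ℝ → ℝ → ℝ → ℝ) : Prop :=
  ContDiff ℝ (⊤ : ℕ∞) (fun q : ℝ × ℝ × ℝ × ℝ => f q.1 q.2.1 q.2.2.1 q.2.2.2)

/-- The rescaled time derivative `Ψ := R ∂_T φ`. -/
def PsiVar (φ : ℝ → ℝ → ℝ → ℝ → ℝ) : ℝ → ℝ → ℝ → ℝ → ℝ :=
  fun T R a b => R * dT φ T R a b

/-! ### Auxiliary machinery -/

abbrev E4 : Type := ℝ × ℝ × ℝ × ℝ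

def unc (f : ℝ → ℝ → ℝ → ℝ → ℝ) : E4 → ℝ := fun q => f q.1 q.2.1 q.2.2.1 q.2.2.2

def pd (v : E4) (g : E4 → ℝ) : E4 → ℝ := fun x => fderiv ℝ g x v

lemma smoothFn_iff {f : ℝ → ℝ → ℝ → ℝ → ℝ} : smoothFn f ↔ ContDiff ℝ (⊤ : ℕ∞) (unc f) := Iff.rfl

lemma pd_contDiff {g : E4 → ℝ} (hg : ContDiff ℝ (⊤ : ℕ∞) g) (v : E4) : ContDiff ℝ (⊤ : ℕ∞) (pd v g) := by
  have h := hg.fderiv_right (m := (⊤ : ℕ∞)) (by simp)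
  exact (ContinuousLinearMap.apply ℝ ℝ v).contDiff.comp h

lemma pd_comm {g : E4 → ℝ} (hg : ContDiff ℝ (⊤ : ℕ∞) g) (v w : E4) (x : E4) :
    pd v (pd w g) x = pd w (pd v g) x := by
  have hdiff : ∀ y, HasFDerivAt g (fderiv ℝ g y) y := fun y =>
    (hg.differentiable (by simp) y).hasFDerivAt
  have h2 : HasFDerivAt (fderiv ℝ g) (fderiv ℝ (fderiv ℝ g) x) x :=
    (((hg.fderiv_right (m := (⊤ : ℕ∞)) (by simp)).differentiable (by simp)) x).hasFDerivAt
  have hsymm := second_derivative_symmetric hdiff h2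
  have key : ∀ u : E4, HasFDerivAt (pd u g)
      ((ContinuousLinearMap.apply ℝ ℝ u).comp (fderiv ℝ (fderiv ℝ g) x)) x := fun u =>
    ((ContinuousLinearMap.apply ℝ ℝ u).hasFDerivAt.comp x h2)
  show fderiv ℝ (pd w g) x v = fderiv ℝ (pd v g) x w
  rw [(key w).fderiv, (key v).fderiv]
  exact hsymm v w

def eT : E4 := (1,0,0,0)
def eR : E4 := (0,1,0,0)
def eA : E4 := (0,0,1,0)
def eB : E4 := (0,0,0,1)

lemma hasDerivAt_sliceT (g : E4 → ℝ) (hg : Differentiable ℝ g) (T R a b : ℝ) :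
    HasDerivAt (fun s => g (s, R, a, b)) (fderiv ℝ g (T,R,a,b) eT) T := by
  have hι : HasDerivAt (fun s : ℝ => ((s, (R, a, b)) : E4)) eT T :=
    (hasDerivAt_id T).prodMk (hasDerivAt_const T ((R,a,b) : ℝ×ℝ×ℝ))
  exact (hg (T,R,a,b)).hasFDerivAt.comp_hasDerivAt T hι

lemma hasDerivAt_sliceR (g : E4 → ℝ) (hg : Differentiable ℝ g) (T R a b : ℝ) :
    HasDerivAt (fun s => g (T, s, a, b)) (fderiv ℝ g (T,R,a,b) eR) R := by
  have hι : HasDerivAt (fun s : ℝ => ((T, (s, (a, b))) : E4)) eR R :=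
    (hasDerivAt_const R T).prodMk ((hasDerivAt_id R).prodMk (hasDerivAt_const R ((a,b):ℝ×ℝ)))
  exact (hg (T,R,a,b)).hasFDerivAt.comp_hasDerivAt R hι

lemma hasDerivAt_sliceA (g : E4 → ℝ) (hg : Differentiable ℝ g) (T R a b : ℝ) :
    HasDerivAt (fun s => g (T, R, s, b)) (fderiv ℝ g (T,R,a,b) eA) a := by
  have hι : HasDerivAt (fun s : ℝ => ((T, (R, (s, b))) : E4)) eA a :=
    (hasDerivAt_const a T).prodMk ((hasDerivAt_const a R).prodMk
      ((hasDerivAt_id a).prodMk (hasDerivAt_const a b)))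
  exact (hg (T,R,a,b)).hasFDerivAt.comp_hasDerivAt a hι

lemma hasDerivAt_sliceB (g : E4 → ℝ) (hg : Differentiable ℝ g) (T R a b : ℝ) :
    HasDerivAt (fun s => g (T, R, a, s)) (fderiv ℝ g (T,R,a,b) eB) b := by
  have hι : HasDerivAt (fun s : ℝ => ((T, (R, (a, s))) : E4)) eB b :=
    (hasDerivAt_const b T).prodMk ((hasDerivAt_const b R).prodMk
      ((hasDerivAt_const b a).prodMk (hasDerivAt_id b)))
  exact (hg (T,R,a,b)).hasFDerivAt.comp_hasDerivAt b hι

lemma dT_eq_pd {f} (hf : smoothFn f) (T R a b : ℝ) :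
    dT f T R a b = pd eT (unc f) (T,R,a,b) :=
  (hasDerivAt_sliceT (unc f) (hf.differentiable (by simp)) T R a b).deriv

lemma dR_eq_pd {f} (hf : smoothFn f) (T R a b : ℝ) :
    dR f T R a b = pd eR (unc f) (T,R,a,b) :=
  (hasDerivAt_sliceR (unc f) (hf.differentiable (by simp)) T R a b).deriv

lemma dA_eq_pd {f} (hf : smoothFn f) (T R a b : ℝ) :
    dA f T R a b = pd eA (unc f) (T,R,a,b) :=
  (hasDerivAt_sliceA (unc f) (hf.differentiable (by simp)) T R a b).deriv

lemma dB_eq_pd {f} (hf : smoothFn f) (T R a b : ℝ) :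
    dB f T R a b = pd eB (unc f) (T,R,a,b) :=
  (hasDerivAt_sliceB (unc f) (hf.differentiable (by simp)) T R a b).deriv

lemma unc_dT {f} (hf : smoothFn f) : unc (dT f) = pd eT (unc f) :=
  funext fun q => dT_eq_pd hf q.1 q.2.1 q.2.2.1 q.2.2.2

lemma unc_dR {f} (hf : smoothFn f) : unc (dR f) = pd eR (unc f) :=
  funext fun q => dR_eq_pd hf q.1 q.2.1 q.2.2.1 q.2.2.2

lemma unc_dA {f} (hf : smoothFn f) : unc (dA f) = pd eA (unc f) :=
  funext fun q => dA_eq_pd hf q.1 q.2.1 q.2.2.1 q.2.2.2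

lemma unc_dB {f} (hf : smoothFn f) : unc (dB f) = pd eB (unc f) :=
  funext fun q => dB_eq_pd hf q.1 q.2.1 q.2.2.1 q.2.2.2

lemma smooth_dT {f} (hf : smoothFn f) : smoothFn (dT f) := by
  rw [smoothFn_iff, unc_dT hf]; exact pd_contDiff hf eT

lemma smooth_dR {f} (hf : smoothFn f) : smoothFn (dR f) := by
  rw [smoothFn_iff, unc_dR hf]; exact pd_contDiff hf eR

lemma smooth_dA {f} (hf : smoothFn f) : smoothFn (dA f) := by
  rw [smoothFn_iff, unc_dA hf]; exact pd_contDiff hf eA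

lemma smooth_dB {f} (hf : smoothFn f) : smoothFn (dB f) := by
  rw [smoothFn_iff, unc_dB hf]; exact pd_contDiff hf eB

/-- `∂_T` of a smooth slice, as a `HasDerivAt` statement. -/
lemma hasDerivAt_dT {f} (hf : smoothFn f) (T R a b : ℝ) :
    HasDerivAt (fun s => f s R a b) (dT f T R a b) T := by
  rw [dT_eq_pd hf]
  exact hasDerivAt_sliceT (unc f) (hf.differentiable (by simp)) T R a b

lemma hasDerivAt_dR {f} (hf : smoothFn f) (T R a b : ℝ) :
    HasDerivAt (fun s => f T s a b) (dR f T R a b) R := by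
  rw [dR_eq_pd hf]
  exact hasDerivAt_sliceR (unc f) (hf.differentiable (by simp)) T R a b

lemma hasDerivAt_dA {f} (hf : smoothFn f) (T R a b : ℝ) :
    HasDerivAt (fun s => f T R s b) (dA f T R a b) a := by
  rw [dA_eq_pd hf]
  exact hasDerivAt_sliceA (unc f) (hf.differentiable (by simp)) T R a b

lemma hasDerivAt_dB {f} (hf : smoothFn f) (T R a b : ℝ) :
    HasDerivAt (fun s => f T R a s) (dB f T R a b) b := by
  rw [dB_eq_pd hf]
  exact hasDerivAt_sliceB (unc f) (hf.differentiable (by simp)) T R a b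

/-- Commutation of `∂_T` with `∂_R`. -/
lemma comm_TR {f} (hf : smoothFn f) : dT (dR f) = dR (dT f) := by
  funext T R a b
  rw [dT_eq_pd (smooth_dR hf), dR_eq_pd (smooth_dT hf), unc_dR hf, unc_dT hf]
  exact pd_comm hf eT eR (T,R,a,b)

lemma comm_TA {f} (hf : smoothFn f) : dT (dA f) = dA (dT f) := by
  funext T R a b
  rw [dT_eq_pd (smooth_dA hf), dA_eq_pd (smooth_dT hf), unc_dA hf, unc_dT hf]
  exact pd_comm hf eT eA (T,R,a,b)

lemma comm_TB {f} (hf : smoothFn f) : dT (dB f) = dB (dT f) := by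
  funext T R a b
  rw [dT_eq_pd (smooth_dB hf), dB_eq_pd (smooth_dT hf), unc_dB hf, unc_dT hf]
  exact pd_comm hf eT eB (T,R,a,b)

theorem ugly_p_shifts_down (p : ℕ) (φ F : ℝ → ℝ → ℝ → ℝ → ℝ)
    (hφ : smoothFn φ) (hF : smoothFn F)
    (hugly : ∀ T R a b, 0 < R → Real.sin a ≠ 0 →
      box φ T R a b = (2 * (p : ℝ) / R) * dT φ T R a b + F T R a b) :
    ∀ T R a b, 0 < R → Real.sin a ≠ 0 →
      box (PsiVar φ) T R a b
        = (2 * ((p : ℝ) - 1) / R) * dT (PsiVar φ) T R a b + R * dT F T R a b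
          + (2 / R) * (dT (PsiVar φ) T R a b + dR (PsiVar φ) T R a b) := by
  intro T R a b hR ha
  have hR' : R ≠ 0 := ne_of_gt hR
  set g := dT φ with hgdef
  have hg : smoothFn g := smooth_dT hφ
  -- first derivatives of Ψ
  have hΨT : dT (PsiVar φ) = fun T R a b => R * dT g T R a b := by
    funext T R a b
    exact ((hasDerivAt_dT hg T R a b).const_mul R).deriv
  have hΨR : dR (PsiVar φ) = fun T R a b => g T R a b + R * dR g T R a b := by
    funext T R a b
    have h := (hasDerivAt_id R).mul (hasDerivAt_dR hg T R a b)
    have := h.deriv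
    change deriv (fun s => s * g T s a b) R = _
    rw [show (fun s => s * g T s a b) = (id * fun s => g T s a b) from rfl, this]; simp
  have hΨA : dA (PsiVar φ) = fun T R a b => R * dA g T R a b := by
    funext T R a b
    exact ((hasDerivAt_dA hg T R a b).const_mul R).deriv
  have hΨB : dB (PsiVar φ) = fun T R a b => R * dB g T R a b := by
    funext T R a b
    exact ((hasDerivAt_dB hg T R a b).const_mul R).deriv
  -- second derivatives of Ψ at the point
  have hTT : dT (dT (PsiVar φ)) T R a b = R * dT (dT g) T R a b := by
    rw [hΨT]
    exact ((hasDerivAt_dT (smooth_dT hg) T R a b).const_mul R).deriv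
  have hAA : dA (dA (PsiVar φ)) T R a b = R * dA (dA g) T R a b := by
    rw [hΨA]
    exact ((hasDerivAt_dA (smooth_dA hg) T R a b).const_mul R).deriv
  have hBB : dB (dB (PsiVar φ)) T R a b = R * dB (dB g) T R a b := by
    rw [hΨB]
    exact ((hasDerivAt_dB (smooth_dB hg) T R a b).const_mul R).deriv
  have hRR : dR (dR (PsiVar φ)) T R a b
      = 2 * dR g T R a b + R * dR (dR g) T R a b := by
    rw [hΨR]
    have h := (hasDerivAt_dR hg T R a b).add
      ((hasDerivAt_id R).mul (hasDerivAt_dR (smooth_dR hg) T R a b))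
    have hd := h.deriv
    simp only [id] at hd
    show deriv (fun x => g T x a b + x * dR g T x a b) R = _
    rw [show (fun x => g T x a b + x * dR g T x a b)
      = ((fun s => g T s a b) + id * fun s => dR g T s a b) from rfl, hd]; ring
  -- differentiating the ugly equation in T
  have hboxfun : (fun s => box φ s R a b)
      = fun s => (2 * (p : ℝ) / R) * g s R a b + F s R a b :=
    funext fun s => hugly s R a b hR ha
  have hL : HasDerivAt (fun s => box φ s R a b)
      (-dT (dT (dT φ)) T R a b + dT (dR (dR φ)) T R a b
        + (2 / R) * dT (dR φ) T R a b
        + (R ^ 2)⁻¹ * (dT (dA (dA φ)) T R a b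
          + (Real.cos a / Real.sin a) * dT (dA φ) T R a b
          + ((Real.sin a) ^ 2)⁻¹ * dT (dB (dB φ)) T R a b)) T := by
    exact (((hasDerivAt_dT (smooth_dT (smooth_dT hφ)) T R a b).neg.add
        (hasDerivAt_dT (smooth_dR (smooth_dR hφ)) T R a b)).add
        ((hasDerivAt_dT (smooth_dR hφ) T R a b).const_mul (2 / R))).add
      ((((hasDerivAt_dT (smooth_dA (smooth_dA hφ)) T R a b).add
        ((hasDerivAt_dT (smooth_dA hφ) T R a b).const_mul
          (Real.cos a / Real.sin a))).add
        ((hasDerivAt_dT (smooth_dB (smooth_dB hφ)) T R a b).const_mul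
          ((Real.sin a) ^ 2)⁻¹)).const_mul (R ^ 2)⁻¹)
  have hRt : HasDerivAt (fun s => (2 * (p : ℝ) / R) * g s R a b + F s R a b)
      ((2 * (p : ℝ) / R) * dT g T R a b + dT F T R a b) T :=
    ((hasDerivAt_dT hg T R a b).const_mul (2 * (p : ℝ) / R)).add
      (hasDerivAt_dT hF T R a b)
  have key : -dT (dT (dT φ)) T R a b + dT (dR (dR φ)) T R a b
        + (2 / R) * dT (dR φ) T R a b
        + (R ^ 2)⁻¹ * (dT (dA (dA φ)) T R a b
          + (Real.cos a / Real.sin a) * dT (dA φ) T R a b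
          + ((Real.sin a) ^ 2)⁻¹ * dT (dB (dB φ)) T R a b)
      = (2 * (p : ℝ) / R) * dT g T R a b + dT F T R a b := by
    have := hboxfun ▸ hL
    exact this.unique hRt
  -- commute derivatives in `key`
  rw [show dT (dT (dT φ)) = dT (dT g) by rw [hgdef],
      show dT (dR (dR φ)) = dR (dR g) by
        rw [comm_TR (smooth_dR hφ), comm_TR hφ],
      show dT (dR φ) = dR g from comm_TR hφ,
      show dT (dA (dA φ)) = dA (dA g) by
        rw [comm_TA (smooth_dA hφ), comm_TA hφ],
      show dT (dA φ) = dA g from comm_TA hφ,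
      show dT (dB (dB φ)) = dB (dB g) by
        rw [comm_TB (smooth_dB hφ), comm_TB hφ]] at key
  -- solve for dT F and conclude
  have hFexpr : dT F T R a b
      = -dT (dT g) T R a b + dR (dR g) T R a b + (2 / R) * dR g T R a b
        + (R ^ 2)⁻¹ * (dA (dA g) T R a b
          + (Real.cos a / Real.sin a) * dA g T R a b
          + ((Real.sin a) ^ 2)⁻¹ * dB (dB g) T R a b)
        - (2 * (p : ℝ) / R) * dT g T R a b := by
    linear_combination -key
  show -dT (dT (PsiVar φ)) T R a b + dR (dR (PsiVar φ)) T R a b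
      + (2 / R) * dR (PsiVar φ) T R a b
      + (R ^ 2)⁻¹ * (dA (dA (PsiVar φ)) T R a b
        + (Real.cos a / Real.sin a) * dA (PsiVar φ) T R a b
        + ((Real.sin a) ^ 2)⁻¹ * dB (dB (PsiVar φ)) T R a b) = _
  rw [hTT, hRR, hAA, hBB, hFexpr]
  rw [show dR (PsiVar φ) T R a b = g T R a b + R * dR g T R a b by rw [hΨR],
      show dT (PsiVar φ) T R a b = R * dT g T R a b by rw [hΨT],
      show dA (PsiVar φ) T R a b = R * dA g T R a b by rw [hΨA]]
  field_simp
  ring
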